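/- For every a > 0 there exists α > 0 such that -2G(U(α)) = a, where U(α) > 0 is defined by ψ_α(U(α)) = -π/2 for the solution ψ_α of ψ' = -√(α² + cos²ψ), ψ(0)=0, and G solves G' = 1/(ψ_α' - α), G(0)=0. Moreover α → ∞ as a → 0⁺. -/

import Mathlib

open Real

/-!
Substituting `θ = ψ(u)` turns `G` into an integral in `θ`: since `1 / (ψ' - α) = ψ' / (s (s + α))`
with `s = -ψ' = √(α² + cos² ψ)`, the width is the explicit function
`width α = 2 ∫_{-π/2}^0 dθ / (s (s + α))`, `s = √(α² + cos² θ)`, whatever `ψ`, `G` and `U` are.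
This function is continuous and antitone on `(0, ∞)`, at most `π / (2α²)` because `s ≥ α`, and at
least `arctan (π / (2α)) / α` because `cos² θ = sin² (θ + π/2) ≤ (θ + π/2)²`. So it tends to `∞`
at `0⁺` and to `0` at `∞`, every `a > 0` is a value `width α`, and a choice of such `α` tends to
`∞` as `a → 0⁺` by monotonicity.
-/

open Filter Set Topology

namespace DanielHauswirth

noncomputable def speed (α θ : ℝ) : ℝ := √(α ^ 2 + cos θ ^ 2)

noncomputable def widthIntegrand (α θ : ℝ) : ℝ := 1 / (speed α θ * (speed α θ + α))

noncomputable def width (α : ℝ) : ℝ := 2 * ∫ θ in -(π / 2)..0, widthIntegrand α θ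

variable {α β : ℝ}

lemma neg_pi_div_two_le_zero : -(π / 2) ≤ 0 := neg_nonpos.2 pi_div_two_pos.le

lemma le_speed (α θ : ℝ) : α ≤ speed α θ :=
  le_sqrt_of_sq_le (le_add_of_nonneg_right (sq_nonneg _))

lemma speed_mono (hα : 0 ≤ α) (hαβ : α ≤ β) (θ : ℝ) : speed α θ ≤ speed β θ :=
  sqrt_le_sqrt (add_le_add_left (pow_le_pow_left₀ hα hαβ 2) _)

lemma speed_sq (α θ : ℝ) : speed α θ ^ 2 = α ^ 2 + cos θ ^ 2 :=
  sq_sqrt (by positivity)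

lemma speed_pos (hα : 0 < α) (θ : ℝ) : 0 < speed α θ :=
  hα.trans_le (le_speed α θ)

lemma widthIntegrand_denom_pos (hα : 0 < α) (θ : ℝ) : 0 < speed α θ * (speed α θ + α) := by
  have := speed_pos hα θ
  positivity

lemma continuous_widthIntegrand (hα : 0 < α) : Continuous (widthIntegrand α) :=
  continuous_const.div (by unfold speed; fun_prop) fun θ => (widthIntegrand_denom_pos hα θ).ne'

lemma widthIntegrand_mul_neg_speed (hα : 0 < α) (θ : ℝ) :
    widthIntegrand α θ * -speed α θ = 1 / (-speed α θ - α) := by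
  have := speed_pos hα θ
  have : -speed α θ - α ≠ 0 := by linarith
  unfold widthIntegrand
  field_simp
  ring

lemma widthIntegrand_antitone (hα : 0 < α) (hαβ : α ≤ β) (θ : ℝ) :
    widthIntegrand β θ ≤ widthIntegrand α θ := by
  have := speed_pos hα θ
  have := speed_mono hα.le hαβ θ
  exact one_div_le_one_div_of_le (widthIntegrand_denom_pos hα θ) (by nlinarith)

lemma widthIntegrand_le (hα : 0 < α) (θ : ℝ) : widthIntegrand α θ ≤ 1 / (2 * α ^ 2) := by
  have := le_speed α θ
  exact one_div_le_one_div_of_le (by positivity) (by nlinarith)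

lemma half_div_le_widthIntegrand (hα : 0 < α) (θ : ℝ) :
    1 / 2 / (α ^ 2 + (θ + π / 2) ^ 2) ≤ widthIntegrand α θ := by
  have hcos : cos θ ^ 2 ≤ (θ + π / 2) ^ 2 := by
    rw [← sin_add_pi_div_two]
    exact sq_le_sq.2 abs_sin_le_abs
  have := le_speed α θ
  have := speed_sq α θ
  rw [widthIntegrand, div_le_div_iff₀ (by positivity) (widthIntegrand_denom_pos hα θ)]
  nlinarith

lemma integral_half_div_sq_add_sq (hα : 0 < α) :
    ∫ θ in -(π / 2)..0, 1 / 2 / (α ^ 2 + (θ + π / 2) ^ 2) = arctan (π / (2 * α)) / (2 * α) := by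
  have hrescale : ∀ x, 1 / 2 / (α ^ 2 + x ^ 2) = (2 * α ^ 2)⁻¹ * (1 + (x / α) ^ 2)⁻¹ := by
    intro x; field_simp
  simp only [hrescale]
  rw [intervalIntegral.integral_const_mul,
    intervalIntegral.integral_comp_add_right (fun x => (1 + (x / α) ^ 2)⁻¹),
    intervalIntegral.integral_comp_div (fun x => (1 + x ^ 2)⁻¹) hα.ne', integral_inv_one_add_sq]
  simp only [neg_add_cancel, zero_add, zero_div, arctan_zero, sub_zero, smul_eq_mul]
  field_simp

lemma intervalIntegrable_widthIntegrand (hα : 0 < α) (a b : ℝ) :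
    IntervalIntegrable (widthIntegrand α) MeasureTheory.volume a b :=
  (continuous_widthIntegrand hα).intervalIntegrable a b

lemma width_antitoneOn : AntitoneOn width (Ioi 0) := by
  intro α hα β _ hαβ
  unfold width
  gcongr
  exact intervalIntegral.integral_mono_on neg_pi_div_two_le_zero
    (intervalIntegrable_widthIntegrand (lt_of_lt_of_le hα hαβ) _ _)
    (intervalIntegrable_widthIntegrand hα _ _) fun θ _ => widthIntegrand_antitone hα hαβ θ

lemma width_le (hα : 0 < α) : width α ≤ π / (2 * α ^ 2) := by
  have := intervalIntegral.integral_mono_on neg_pi_div_two_le_zero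
    (intervalIntegrable_widthIntegrand hα _ _) intervalIntegrable_const
    fun θ _ => widthIntegrand_le hα θ
  rw [intervalIntegral.integral_const, smul_eq_mul] at this
  rw [width]
  calc _ ≤ 2 * ((0 - -(π / 2)) * (1 / (2 * α ^ 2))) := by gcongr
    _ = _ := by ring

lemma arctan_div_le_width (hα : 0 < α) : arctan (π / (2 * α)) / α ≤ width α := by
  have : ∫ θ in -(π / 2)..0, 1 / 2 / (α ^ 2 + (θ + π / 2) ^ 2) ≤
      ∫ θ in -(π / 2)..0, widthIntegrand α θ :=
    intervalIntegral.integral_mono_on neg_pi_div_two_le_zero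
      ((continuous_const.div (by fun_prop) fun θ => by positivity).intervalIntegrable _ _)
      (intervalIntegrable_widthIntegrand hα _ _) fun θ _ => half_div_le_widthIntegrand hα θ
  rw [integral_half_div_sq_add_sq hα] at this
  rw [width]
  calc _ = 2 * (arctan (π / (2 * α)) / (2 * α)) := by field_simp
    _ ≤ _ := by gcongr

lemma width_pos (hα : 0 < α) : 0 < width α :=
  (div_pos (arctan_pos.2 (by positivity)) hα).trans_le (arctan_div_le_width hα)

lemma continuousOn_width : ContinuousOn width (Ioi 0) := by
  rw [continuousOn_iff_continuous_domRestrict]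
  refine continuous_const.mul
    (intervalIntegral.continuous_parametric_intervalIntegral_of_continuous' ?_ _ _)
  exact continuous_const.div (by unfold speed; fun_prop)
    fun p => (widthIntegrand_denom_pos p.1.2 p.2).ne'

lemma tendsto_width_nhdsGT_zero : Tendsto width (𝓝[>] 0) atTop := by
  refine tendsto_atTop_mono' _ ?_
    (tendsto_inv_nhdsGT_zero.const_mul_atTop (by positivity : 0 < π / 4))
  filter_upwards [Ioo_mem_nhdsGT one_pos] with α ⟨hα, hα1⟩
  have h1 : 1 ≤ π / (2 * α) := by
    rw [le_div_iff₀ (by positivity)]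
    linarith [pi_gt_three]
  calc π / 4 * α⁻¹ = arctan 1 / α := by rw [arctan_one]; ring
    _ ≤ arctan (π / (2 * α)) / α := by gcongr
    _ ≤ width α := arctan_div_le_width hα

lemma tendsto_width_atTop : Tendsto width atTop (𝓝 0) := by
  have hbound : Tendsto (fun α : ℝ => π / (2 * α ^ 2)) atTop (𝓝 0) :=
    tendsto_const_nhds.div_atTop ((tendsto_pow_atTop two_ne_zero).const_mul_atTop two_pos)
  refine tendsto_of_tendsto_of_tendsto_of_le_of_le' tendsto_const_nhds hbound ?_ ?_
  · filter_upwards [eventually_gt_atTop 0] with α hα using (width_pos hα).le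
  · filter_upwards [eventually_gt_atTop 0] with α hα using width_le hα

lemma exists_width_eq {a : ℝ} (ha : 0 < a) : ∃ α, 0 < α ∧ width α = a := by
  obtain ⟨α₁, ha₁, hα₁⟩ :=
    ((tendsto_width_nhdsGT_zero.eventually_ge_atTop a).and self_mem_nhdsWithin).exists
  obtain ⟨α₂, ha₂, hα₁₂⟩ :=
    ((tendsto_width_atTop.eventually (ge_mem_nhds ha)).and (eventually_ge_atTop α₁)).exists
  obtain ⟨α, hα, hαa⟩ := intermediate_value_Icc' hα₁₂
    (continuousOn_width.mono fun x hx => lt_of_lt_of_le hα₁ hx.1) ⟨ha₂, ha₁⟩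
  exact ⟨α, lt_of_lt_of_le hα₁ hα.1, hαa⟩

lemma tendsto_nhdsGT_zero_of_width_eq {A : ℝ → ℝ}
    (hA : ∀ a, 0 < a → 0 < A a ∧ width (A a) = a) :
    Tendsto A (𝓝[>] 0) atTop := by
  refine tendsto_atTop.2 fun M => ?_
  have hβ : 0 < max M 1 := lt_max_of_lt_right one_pos
  filter_upwards [Ioo_mem_nhdsGT (width_pos hβ)] with a ⟨ha, haβ⟩
  by_contra! hAM
  have := width_antitoneOn (hA a ha).1 hβ (hAM.le.trans (le_max_left M 1))
  rw [(hA a ha).2] at this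
  exact this.not_gt haβ

lemma neg_two_mul_eq_width (hα : 0 < α) {ψ G : ℝ → ℝ} {U : ℝ}
    (hψ : ∀ u, HasDerivAt ψ (-speed α (ψ u)) u) (hψ0 : ψ 0 = 0) (hψU : ψ U = -(π / 2))
    (hG : ∀ u, HasDerivAt G (1 / (-speed α (ψ u) - α)) u) (hG0 : G 0 = 0) :
    -2 * G U = width α := by
  set Φ : ℝ → ℝ := fun θ => ∫ t in 0..θ, widthIntegrand α t
  have hΦψ : ∀ u, HasDerivAt (fun u => Φ (ψ u)) (1 / (-speed α (ψ u) - α)) u := fun u => by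
    rw [← widthIntegrand_mul_neg_speed hα]
    exact ((continuous_widthIntegrand hα).integral_hasStrictDerivAt 0 (ψ u)).hasDerivAt.comp u
      (hψ u)
  have hconst : G U - Φ (ψ U) = G 0 - Φ (ψ 0) :=
    is_const_of_deriv_eq_zero (fun u => ((hG u).sub (hΦψ u)).differentiableAt)
      (fun u => by simpa only [sub_self] using ((hG u).sub (hΦψ u)).deriv) U 0
  simp only [Φ, hψU, hψ0, hG0, intervalIntegral.integral_same, sub_zero] at hconst
  rw [intervalIntegral.integral_symm (-(π / 2)) 0] at hconst
  rw [width]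
  linarith

end DanielHauswirth

/-- For every `a > 0` there is `α = A a > 0` such that the width `-2 G(U(α))` of the
Daniel–Hauswirth helicoid equals `a`, where `ψ` solves `ψ' = -√(α² + cos²ψ)`, `ψ(0)=0`,
`U > 0` satisfies `ψ(U) = -π/2`, and `G` solves `G' = 1/(ψ' - α)`, `G(0)=0`.
Moreover `α → ∞` as `a → 0⁺`. -/
theorem stmt_4 :
    ∃ A : ℝ → ℝ,
      (∀ a : ℝ, 0 < a → 0 < A a ∧
        ∀ (ψ G : ℝ → ℝ) (U : ℝ),
          (∀ u, HasDerivAt ψ (-Real.sqrt ((A a)^2 + Real.cos (ψ u) ^ 2)) u) → ψ 0 = 0 →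
          0 < U → ψ U = -(π/2) →
          (∀ u, HasDerivAt G (1 / (-Real.sqrt ((A a)^2 + Real.cos (ψ u) ^ 2) - A a)) u) →
          G 0 = 0 →
          -2 * G U = a) ∧
      Filter.Tendsto A (nhdsWithin 0 (Set.Ioi 0)) Filter.atTop := by
  choose! A hA using fun a (ha : 0 < a) => DanielHauswirth.exists_width_eq ha
  refine ⟨A, fun a ha => ⟨(hA a ha).1, fun ψ G U hψ hψ0 _ hψU hG hG0 => ?_⟩,
    DanielHauswirth.tendsto_nhdsGT_zero_of_width_eq hA⟩
  rw [DanielHauswirth.neg_two_mul_eq_width (hA a ha).1 hψ hψ0 hψU hG hG0, (hA a ha).2]
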